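/- For the function f₂(x, y, u0, u1) = (¬x ∧ d(y, u0, u1)) ∨ (x ∧ (u0 ∨ u1)), where d(y, u0, u1) = (¬y ∧ u0) ∨ (y ∧ u1), the set {u0, u1} is not stable, as witnessed by the superset {y, u0, u1}: the assignment x := 0 is a relevance hypercube for {y, u0, u1}, but neither assignment of a constant to y under x := 0 yields a projection depending on both u0 and u1. -/

import Mathlib

/-- A Boolean function `f` depends on variable `i`. -/
def DependsOnVar {ι : Type*} (f : (ι → Bool) → Bool) (i : ι) : Prop :=
  ∃ a b : ι → Bool, (∀ j, j ≠ i → a j = b j) ∧ f a ≠ f b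

/-- The projection of `f` obtained by fixing all variables outside `S`
to the values given by `p`. -/
def Restrict {n : ℕ} (f : (Fin n → Bool) → Bool) (S : Finset (Fin n))
    (p : Fin n → Bool) : (Fin n → Bool) → Bool :=
  fun x => f fun j => if j ∈ S then x j else p j

/-- `p` determines a relevance hypercube for `S`: the induced projection
depends on every variable of `S`. -/
def IsRelHypercube {n : ℕ} (f : (Fin n → Bool) → Bool) (S : Finset (Fin n))
    (p : Fin n → Bool) : Prop :=
  ∀ i ∈ S, DependsOnVar (Restrict f S p) i

/-- Variables: x = 0, y = 1, u0 = 2, u1 = 3. -/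
def f2 : (Fin 4 → Bool) → Bool := fun v =>
  (!v 0 && ((!v 1 && v 2) || (v 1 && v 3))) || (v 0 && (v 2 || v 3))

/-! Under `x := 0`, `f₂` is the multiplexer `d(y, u0, u1)`, which depends on all three of its
inputs; but once `y` is fixed as well, the multiplexer collapses to the single variable it
selects, so it ignores the other one of `u0`, `u1`. -/

theorem not_dependsOnVar_eval {ι : Type*} {i j : ι} (hij : i ≠ j) :
    ¬ DependsOnVar (fun v : ι → Bool => v j) i :=
  fun ⟨_, _, hab, hne⟩ => hne (hab j hij.symm)

theorem restrict_f2_u0_u1_of_x_false (p : Fin 4 → Bool) (hx : p 0 = false) :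
    Restrict f2 {2, 3} p = fun v => if p 1 then v 3 else v 2 := by
  funext v
  cases hy : p 1 <;> simp [Restrict, f2, hx, hy]

/-- The set {u0, u1} is not stable for f2: x := 0 gives a relevance hypercube
for {y, u0, u1}, but no extension fixing y gives one for {u0, u1}. -/
theorem stmt6 :
    IsRelHypercube f2 ({1, 2, 3} : Finset (Fin 4)) (fun _ => false) ∧
    ∀ p : Fin 4 → Bool, p 0 = false →
      ¬ IsRelHypercube f2 ({2, 3} : Finset (Fin 4)) p := by
  constructor
  · intro i hi
    fin_cases hi
    · exact ⟨![false, false, true, false], ![false, true, true, false], by decide, by decide⟩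
    · exact ⟨![false, false, true, false], ![false, false, false, false], by decide, by decide⟩
    · exact ⟨![false, true, false, true], ![false, true, false, false], by decide, by decide⟩
  · intro p hx h
    rw [IsRelHypercube, restrict_f2_u0_u1_of_x_false p hx] at h
    cases hy : p 1
    · have h3 : DependsOnVar (fun v : Fin 4 → Bool => v 2) 3 := by
        simpa [hy] using h 3 (by decide)
      exact not_dependsOnVar_eval (by decide) h3
    · have h2 : DependsOnVar (fun v : Fin 4 → Bool => v 3) 2 := by
        simpa [hy] using h 2 (by decide)
      exact not_dependsOnVar_eval (by decide) h2
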